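/- arXiv:2506.13715 — 3 statements merged into one kernel-verified Lean document; each statement's English description precedes it below -/
import Mathlib

section
/- Let n, d ∈ ℕ with d ≥ 1, let σ > 0 and L > 0, and suppose the vectors ξ_1,…,ξ_n ∈ ℝ^d satisfy ‖ξ_i‖² ≥ σ²·d/2 for all i and |⟨ξ_i, ξ_j⟩| ≤ 2·σ²·√(d·L) for all i ≠ j. Then for all real numbers c_1,…,c_n: ‖Σ_{i=1}^n c_i·ξ_i/‖ξ_i‖²‖² ≤ 4·σ^{-2}·d^{-1}·Σ_{i=1}^n c_i² + 32·σ^{-2}·d^{-3/2}·√L·((Σ_{i=1}^n |c_i|)² − Σ_{i=1}^n c_i²). -/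
/-! Write the vector as `∑ cᵢ • wᵢ` with `wᵢ = ξᵢ / ‖ξᵢ‖²` and expand the square norm as the
Gram form `∑ᵢⱼ cᵢ cⱼ ⟪wᵢ, wⱼ⟫`. The lower bound on `‖ξᵢ‖²` bounds the diagonal entries
`‖wᵢ‖² = 1 / ‖ξᵢ‖²` by `2 / (σ² d)`, and together with the near-orthogonality of the `ξᵢ` bounds the
off-diagonal entries by `8 √L / (σ² d^{3/2})`; the off-diagonal part of the Gram form is then at
most that bound times `∑_{i ≠ j} |cᵢ| |cⱼ| = (∑ |cᵢ|)² - ∑ cᵢ²`. -/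

open Finset RealInnerProductSpace

theorem sum_sum_erase_mul_eq {ι : Type*} [Fintype ι] [DecidableEq ι] (x : ι → ℝ) :
    ∑ i, ∑ j ∈ univ.erase i, x i * x j = (∑ i, x i) ^ 2 - ∑ i, x i ^ 2 := by
  simp only [← mul_sum, sum_erase_eq_sub (mem_univ _), sum_sub_distrib, ← sum_mul, sq]

section InnerProductSpace

variable {ι E : Type*} [NormedAddCommGroup E] [InnerProductSpace ℝ E]

theorem norm_sq_sum_smul_le [Fintype ι] (w : ι → E) (c : ι → ℝ) {A B : ℝ}
    (hA : ∀ i, ‖w i‖ ^ 2 ≤ A) (hB : ∀ i j, i ≠ j → |⟪w i, w j⟫| ≤ B) :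
    ‖∑ i, c i • w i‖ ^ 2 ≤ A * ∑ i, c i ^ 2 + B * ((∑ i, |c i|) ^ 2 - ∑ i, c i ^ 2) := by
  classical
  have hdiag (i : ι) : c i * c i * ⟪w i, w i⟫ ≤ A * c i ^ 2 := by
    rw [real_inner_self_eq_norm_sq, ← sq, mul_comm A]
    exact mul_le_mul_of_nonneg_left (hA i) (sq_nonneg _)
  have hoff (i j : ι) (hij : i ≠ j) : c i * c j * ⟪w i, w j⟫ ≤ B * (|c i| * |c j|) :=
    calc c i * c j * ⟪w i, w j⟫ ≤ |c i| * |c j| * |⟪w i, w j⟫| := by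
          rw [← abs_mul, ← abs_mul]; exact le_abs_self _
      _ ≤ B * (|c i| * |c j|) := by
          rw [mul_comm B]; exact mul_le_mul_of_nonneg_left (hB i j hij) (by positivity)
  have hpairs : ∑ i, ∑ j ∈ univ.erase i, |c i| * |c j| = (∑ i, |c i|) ^ 2 - ∑ i, c i ^ 2 := by
    simp only [sum_sum_erase_mul_eq, sq_abs]
  calc ‖∑ i, c i • w i‖ ^ 2
      = ∑ i, (c i * c i * ⟪w i, w i⟫ + ∑ j ∈ univ.erase i, c i * c j * ⟪w i, w j⟫) := by
        rw [← real_inner_self_eq_norm_sq, sum_inner]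
        simp only [inner_sum, real_inner_smul_left]
        simp only [real_inner_smul_right, ← mul_assoc]
        exact sum_congr rfl fun i _ => (add_sum_erase _ _ (mem_univ i)).symm
    _ ≤ ∑ i, (A * c i ^ 2 + ∑ j ∈ univ.erase i, B * (|c i| * |c j|)) :=
        sum_le_sum fun i _ => add_le_add (hdiag i) <|
          sum_le_sum fun j hj => hoff i j (ne_of_mem_erase hj).symm
    _ = A * ∑ i, c i ^ 2 + B * ((∑ i, |c i|) ^ 2 - ∑ i, c i ^ 2) := by
        rw [← hpairs]
        simp only [mul_sum, sum_add_distrib]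

theorem norm_sq_inv_norm_sq_smul_le {x : E} {m : ℝ} (hm : 0 < m) (hx : m ≤ ‖x‖ ^ 2) :
    ‖(‖x‖ ^ 2)⁻¹ • x‖ ^ 2 ≤ m⁻¹ := by
  have hx0 : 0 < ‖x‖ ^ 2 := hm.trans_le hx
  have hnorm : ‖(‖x‖ ^ 2)⁻¹ • x‖ ^ 2 = (‖x‖ ^ 2)⁻¹ := by
    rw [norm_smul, mul_pow, norm_inv, norm_pow, norm_norm]
    field_simp
  rw [hnorm]
  exact inv_anti₀ hm hx

theorem abs_inner_inv_norm_sq_smul_le {x y : E} {m M : ℝ} (hm : 0 < m) (hx : m ≤ ‖x‖ ^ 2)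
    (hy : m ≤ ‖y‖ ^ 2) (hxy : |⟪x, y⟫| ≤ M) :
    |⟪(‖x‖ ^ 2)⁻¹ • x, (‖y‖ ^ 2)⁻¹ • y⟫| ≤ M / m ^ 2 := by
  have hinner : ⟪(‖x‖ ^ 2)⁻¹ • x, (‖y‖ ^ 2)⁻¹ • y⟫ = ⟪x, y⟫ / (‖x‖ ^ 2 * ‖y‖ ^ 2) := by
    rw [real_inner_smul_left, real_inner_smul_right]
    field_simp
  rw [hinner, abs_div, abs_of_nonneg (by positivity : (0 : ℝ) ≤ ‖x‖ ^ 2 * ‖y‖ ^ 2), sq m]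
  exact div_le_div₀ ((abs_nonneg _).trans hxy) hxy (by positivity)
    (mul_le_mul hx hy hm.le (by positivity))

end InnerProductSpace

theorem norm_sq_weighted_noise_sum_bound_general (n d : ℕ) (hd : 1 ≤ d)
    (σ L : ℝ) (hσ : 0 < σ)
    (ξ : Fin n → EuclideanSpace ℝ (Fin d))
    (hnorm : ∀ i : Fin n, σ ^ 2 * d / 2 ≤ ‖ξ i‖ ^ 2)
    (hinner : ∀ i j : Fin n, i ≠ j →
      |(inner ℝ (ξ i) (ξ j) : ℝ)| ≤ 2 * σ ^ 2 * Real.sqrt (d * L))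
    (c : Fin n → ℝ) :
    ‖∑ i : Fin n, (c i / ‖ξ i‖ ^ 2) • ξ i‖ ^ 2 ≤
      4 / (σ ^ 2 * d) * ∑ i : Fin n, (c i) ^ 2 +
        32 / (σ ^ 2 * (d : ℝ) ^ ((3 : ℝ) / 2)) * Real.sqrt L *
          ((∑ i : Fin n, |c i|) ^ 2 - ∑ i : Fin n, (c i) ^ 2) := by
  have hd0 : (0 : ℝ) < d := by exact_mod_cast hd
  have hm : 0 < σ ^ 2 * d / 2 := by positivity
  have hdiag : (σ ^ 2 * d / 2)⁻¹ ≤ 4 / (σ ^ 2 * d) := by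
    rw [inv_div]; gcongr; norm_num
  have hoff : 2 * σ ^ 2 * Real.sqrt (d * L) / (σ ^ 2 * d / 2) ^ 2 ≤
      32 / (σ ^ 2 * (d : ℝ) ^ ((3 : ℝ) / 2)) * Real.sqrt L := by
    obtain ⟨s, hs, hds⟩ : ∃ s, 0 < s ∧ (d : ℝ) = s ^ 2 :=
      ⟨_, Real.sqrt_pos.2 hd0, (Real.sq_sqrt hd0.le).symm⟩
    have hs32 : (s ^ 2) ^ ((3 : ℝ) / 2) = s ^ 3 := by
      rw [← Real.rpow_natCast, ← Real.rpow_mul hs.le]; norm_num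
    rw [hds, Real.sqrt_mul (by positivity), Real.sqrt_sq hs.le, hs32, div_le_iff₀ (by positivity)]
    field_simp
    nlinarith [Real.sqrt_nonneg L]
  simp only [div_eq_mul_inv (c _), ← smul_smul]
  exact norm_sq_sum_smul_le _ c
    (fun i => (norm_sq_inv_norm_sq_smul_le hm (hnorm i)).trans hdiag)
    (fun i j hij =>
      (abs_inner_inv_norm_sq_smul_le hm (hnorm i) (hnorm j) (hinner i j hij)).trans hoff)

theorem norm_sq_weighted_noise_sum_bound (n d : ℕ) (hd : 1 ≤ d)
    (σ L : ℝ) (hσ : 0 < σ) (hL : 0 < L)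
    (ξ : Fin n → EuclideanSpace ℝ (Fin d))
    (hnorm : ∀ i : Fin n, σ ^ 2 * d / 2 ≤ ‖ξ i‖ ^ 2)
    (hinner : ∀ i j : Fin n, i ≠ j →
      |(inner ℝ (ξ i) (ξ j) : ℝ)| ≤ 2 * σ ^ 2 * Real.sqrt (d * L))
    (c : Fin n → ℝ) :
    ‖∑ i : Fin n, (c i / ‖ξ i‖ ^ 2) • ξ i‖ ^ 2 ≤
      4 / (σ ^ 2 * d) * ∑ i : Fin n, (c i) ^ 2 +
        32 / (σ ^ 2 * (d : ℝ) ^ ((3 : ℝ) / 2)) * Real.sqrt L *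
          ((∑ i : Fin n, |c i|) ^ 2 - ∑ i : Fin n, (c i) ^ 2) :=
  norm_sq_weighted_noise_sum_bound_general n d hd σ L hσ ξ hnorm hinner c
end

section
/- For every d ∈ ℕ, σ > 0, v ∈ ℝ^d, and every measurable set A ⊆ ℝ^d: |μ_{d,σ}(A) − μ_{d,σ}({x : x + v ∈ A})| ≤ ‖v‖/(2σ). Equivalently, the total variation distance between N(0, σ²·I_d) and N(v, σ²·I_d) is at most ‖v‖/(2σ). -/
open MeasureTheory ProbabilityTheory Real

/-- The centered isotropic Gaussian measure `N(0, σ²·I_d)` on `ℝ^d`. -/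
noncomputable def gaussianPi (d : ℕ) (σ : ℝ) :
    Measure (EuclideanSpace ℝ (Fin d)) :=
  (Measure.pi fun _ : Fin d => gaussianReal 0 ⟨σ ^ 2, sq_nonneg σ⟩).map
    (MeasurableEquiv.toLp 2 (Fin d → ℝ))

/-!
The translate `N(v, σ²I)` has density `r(x) = exp ((⟪v, x⟫ - ‖v‖² / 2) / σ²)` with respect to
`N(0, σ²I)`. Writing `|1 - r| = |1 - √r| (1 + √r)`, Cauchy–Schwarz bounds the total variation
`½ ∫ |1 - r|` by `√(1 - a²)`, where `a = ∫ √r` is the Hellinger affinity. As `√r` is a constant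
multiple of the density of the shift by `v / 2`, `a = exp (-‖v‖² / (8σ²))`, and
`1 - a² ≤ ‖v‖² / (4σ²)`.
-/

open scoped NNReal ENNReal InnerProductSpace

section TotalVariation

variable {α : Type*} [MeasurableSpace α] {μ : Measure α}

lemma abs_setIntegral_le_half_integral_abs {f : α → ℝ} (hf : Integrable f μ)
    (hf0 : ∫ x, f x ∂μ = 0) {A : Set α} (hA : MeasurableSet A) :
    |∫ x in A, f x ∂μ| ≤ (∫ x, |f x| ∂μ) / 2 := by
  have hcompl : ∫ x in Aᶜ, f x ∂μ = -∫ x in A, f x ∂μ := by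
    linarith [integral_add_compl hA hf]
  have hA_le : |∫ x in A, f x ∂μ| ≤ ∫ x in A, |f x| ∂μ := abs_integral_le_integral_abs
  have hAc_le : |∫ x in Aᶜ, f x ∂μ| ≤ ∫ x in Aᶜ, |f x| ∂μ := abs_integral_le_integral_abs
  rw [hcompl, abs_neg] at hAc_le
  linarith [integral_add_compl hA hf.abs]

lemma integral_mul_le_sqrt_integral_sq_mul_sqrt_integral_sq {f g : α → ℝ}
    (hf0 : 0 ≤ f) (hg0 : 0 ≤ g) (hf : MemLp f 2 μ) (hg : MemLp g 2 μ) :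
    ∫ x, f x * g x ∂μ ≤ √(∫ x, f x ^ 2 ∂μ) * √(∫ x, g x ^ 2 ∂μ) := by
  have h := integral_mul_le_Lp_mul_Lq_of_nonneg Real.HolderConjugate.two_two
    (ae_of_all _ hf0) (ae_of_all _ hg0) (by simpa using hf) (by simpa using hg)
  simpa [Real.sqrt_eq_rpow] using h

lemma integral_abs_one_sub_le_two_mul_sqrt [IsProbabilityMeasure μ] {r : α → ℝ} (hr0 : 0 ≤ r)
    (hr : Integrable r μ) (hr1 : ∫ x, r x ∂μ = 1) :
    ∫ x, |1 - r x| ∂μ ≤ 2 * √(1 - (∫ x, √(r x) ∂μ) ^ 2) := by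
  set s : α → ℝ := fun x => √(r x)
  set a := ∫ x, s x ∂μ
  have hs_sq : ∀ x, s x ^ 2 = r x := fun x => Real.sq_sqrt (hr0 x)
  have hs2 : MemLp s 2 μ := (memLp_two_iff_integrable_sq
    (continuous_sqrt.comp_aestronglyMeasurable hr.1)).2
      (by rwa [show (fun x => s x ^ 2) = r from funext hs_sq])
  have hs : Integrable s μ := hs2.integrable one_le_two
  have hsub : MemLp (fun x => |1 - s x|) 2 μ := ((memLp_const (1 : ℝ)).sub hs2).abs
  have hadd : MemLp (fun x => 1 + s x) 2 μ := (memLp_const (1 : ℝ)).add hs2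
  have hsub_sq : ∫ x, |1 - s x| ^ 2 ∂μ = 2 - 2 * a := by
    have : ∀ x, |1 - s x| ^ 2 = 1 - 2 * s x + r x := fun x => by rw [sq_abs, ← hs_sq]; ring
    simp only [this]
    rw [integral_add (f := fun x => 1 - 2 * s x) ((integrable_const 1).sub (hs.const_mul 2)) hr,
      integral_sub (integrable_const 1) (hs.const_mul 2), integral_const_mul, hr1,
      integral_const, probReal_univ, smul_eq_mul, mul_one]
    ring
  have hadd_sq : ∫ x, (1 + s x) ^ 2 ∂μ = 2 + 2 * a := by
    have : ∀ x, (1 + s x) ^ 2 = 1 + 2 * s x + r x := fun x => by rw [← hs_sq]; ring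
    simp only [this]
    rw [integral_add (f := fun x => 1 + 2 * s x) ((integrable_const 1).add (hs.const_mul 2)) hr,
      integral_add (integrable_const 1) (hs.const_mul 2), integral_const_mul, hr1,
      integral_const, probReal_univ, smul_eq_mul, mul_one]
    ring
  have hfactor : ∀ x, |1 - r x| = |1 - s x| * (1 + s x) := fun x => by
    rw [← hs_sq, show (1 : ℝ) - s x ^ 2 = (1 - s x) * (1 + s x) by ring, abs_mul,
      abs_of_nonneg (by positivity : 0 ≤ 1 + s x)]
  calc ∫ x, |1 - r x| ∂μ = ∫ x, |1 - s x| * (1 + s x) ∂μ := by simp only [hfactor]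
    _ ≤ √(2 - 2 * a) * √(2 + 2 * a) := by
      rw [← hsub_sq, ← hadd_sq]
      exact integral_mul_le_sqrt_integral_sq_mul_sqrt_integral_sq (fun x => abs_nonneg _)
        (fun x => by positivity) hsub hadd
    _ = 2 * √(1 - a ^ 2) := by
      rw [← Real.sqrt_mul' _ (by positivity),
        show (2 - 2 * a) * (2 + 2 * a) = 2 ^ 2 * (1 - a ^ 2) by ring,
        Real.sqrt_mul (by positivity), Real.sqrt_sq zero_le_two]

lemma integrable_of_isFiniteMeasure_withDensity_ofReal {r : α → ℝ} (hr0 : 0 ≤ r)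
    (hr : AEStronglyMeasurable r μ)
    [IsFiniteMeasure (μ.withDensity fun x => ENNReal.ofReal (r x))] :
    Integrable r μ := by
  refine ⟨hr, (hasFiniteIntegral_iff_ofReal (ae_of_all _ hr0)).2 ?_⟩
  rw [← setLIntegral_univ, ← withDensity_apply _ .univ]
  exact measure_lt_top _ _

lemma measureReal_withDensity_ofReal {r : α → ℝ} (hr0 : 0 ≤ r) (hr : Integrable r μ)
    {A : Set α} (hA : MeasurableSet A) :
    (μ.withDensity fun x => ENNReal.ofReal (r x)).real A = ∫ x in A, r x ∂μ := by
  rw [measureReal_def, withDensity_apply _ hA,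
    ← ofReal_integral_eq_lintegral_ofReal hr.integrableOn (ae_of_all _ hr0),
    ENNReal.toReal_ofReal (setIntegral_nonneg hA fun x _ => hr0 x)]

lemma integral_eq_one_of_isProbabilityMeasure_withDensity_ofReal {r : α → ℝ} (hr0 : 0 ≤ r)
    (hr : AEStronglyMeasurable r μ)
    [IsProbabilityMeasure (μ.withDensity fun x => ENNReal.ofReal (r x))] :
    ∫ x, r x ∂μ = 1 := by
  simpa using (measureReal_withDensity_ofReal hr0
    (integrable_of_isFiniteMeasure_withDensity_ofReal hr0 hr) .univ).symm

lemma abs_measureReal_sub_withDensity_ofReal_le [IsProbabilityMeasure μ] {r : α → ℝ}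
    (hr0 : 0 ≤ r) (hr : AEStronglyMeasurable r μ)
    [IsProbabilityMeasure (μ.withDensity fun x => ENNReal.ofReal (r x))]
    {A : Set α} (hA : MeasurableSet A) :
    |μ.real A - (μ.withDensity fun x => ENNReal.ofReal (r x)).real A|
      ≤ √(1 - (∫ x, √(r x) ∂μ) ^ 2) := by
  have hint : Integrable r μ := integrable_of_isFiniteMeasure_withDensity_ofReal hr0 hr
  have hr1 : ∫ x, r x ∂μ = 1 := integral_eq_one_of_isProbabilityMeasure_withDensity_ofReal hr0 hr
  have hdiff : μ.real A - (μ.withDensity fun x => ENNReal.ofReal (r x)).real A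
      = ∫ x in A, (1 - r x) ∂μ := by
    rw [measureReal_withDensity_ofReal hr0 hint hA,
      integral_sub (integrable_const 1).integrableOn hint.integrableOn, setIntegral_const,
      smul_eq_mul, mul_one]
  have htot : ∫ x, (1 - r x) ∂μ = 0 := by
    rw [integral_sub (integrable_const 1) hint, hr1]; simp
  calc |μ.real A - (μ.withDensity fun x => ENNReal.ofReal (r x)).real A|
      ≤ (∫ x, |1 - r x| ∂μ) / 2 :=
        hdiff ▸ abs_setIntegral_le_half_integral_abs ((integrable_const 1).sub hint) htot hA
    _ ≤ √(1 - (∫ x, √(r x) ∂μ) ^ 2) := by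
      linarith [integral_abs_one_sub_le_two_mul_sqrt hr0 hint hr1]

end TotalVariation

lemma MeasurableEquiv.map_withDensity_comp {α β : Type*} [MeasurableSpace α]
    [MeasurableSpace β] (e : α ≃ᵐ β) (μ : Measure α) (f : β → ℝ≥0∞) :
    (μ.withDensity (f ∘ e)).map e = (μ.map e).withDensity f := by
  ext s hs
  rw [Measure.map_apply e.measurable hs, withDensity_apply _ (e.measurable hs),
    withDensity_apply _ hs, e.restrict_map, lintegral_map_equiv, Function.comp_def]

lemma MeasureTheory.Measure.pi_withDensity {ι : Type*} [Fintype ι] {α : ι → Type*}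
    [∀ i, MeasurableSpace (α i)] {μ : ∀ i, Measure (α i)} [∀ i, IsProbabilityMeasure (μ i)]
    {f : ∀ i, α i → ℝ≥0∞} (hf : ∀ i, Measurable (f i))
    [∀ i, SigmaFinite ((μ i).withDensity (f i))] :
    Measure.pi (fun i => (μ i).withDensity (f i))
      = (Measure.pi μ).withDensity fun x => ∏ i, f i (x i) := by
  refine Measure.pi_eq fun s hs => ?_
  have hbox : (Set.univ.pi s).indicator (fun x => ∏ i, f i (x i))
      = fun x => ∏ i, (s i).indicator (f i) (x i) := by
    ext x
    by_cases hx : x ∈ Set.univ.pi s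
    · simp_all [Set.indicator_of_mem]
    · obtain ⟨i, hi⟩ : ∃ i, x i ∉ s i := by simpa [Set.mem_pi] using hx
      rw [Set.indicator_of_notMem hx]
      exact (Finset.prod_eq_zero (Finset.mem_univ i) (Set.indicator_of_notMem hi _)).symm
  rw [withDensity_apply _ (.univ_pi hs), ← lintegral_indicator (.univ_pi hs), hbox,
    lintegral_prod_eq_prod_lintegral_of_indepFun _ _
      (iIndepFun_pi fun i => ((hf i).indicator (hs i)).aemeasurable)
      fun i => ((hf i).indicator (hs i)).comp (measurable_pi_apply i)]
  refine Finset.prod_congr rfl fun i _ => ?_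
  rw [withDensity_apply _ (hs i), ← lintegral_indicator (hs i),
    (measurePreserving_eval μ i).lintegral_comp ((hf i).indicator (hs i))]

lemma gaussianReal_map_add_const_eq_withDensity {v : ℝ≥0} (hv : v ≠ 0) (m : ℝ) :
    (gaussianReal 0 v).map (· + m)
      = (gaussianReal 0 v).withDensity
          fun t => ENNReal.ofReal (exp ((m * t - m ^ 2 / 2) / v)) := by
  rw [gaussianReal_map_add_const, zero_add, gaussianReal_of_var_ne_zero _ hv,
    gaussianReal_of_var_ne_zero _ hv,
    ← withDensity_mul _ (measurable_gaussianPDF _ _) (by fun_prop)]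
  congr 1
  ext t
  rw [Pi.mul_apply, gaussianPDF, gaussianPDF, ← ENNReal.ofReal_mul (gaussianPDFReal_nonneg _ _ _),
    gaussianPDFReal, gaussianPDFReal, mul_assoc _ (rexp _), ← exp_add, sub_zero]
  congr 3
  ring

lemma pi_gaussianReal_map_add_eq_withDensity {ι : Type*} [Fintype ι] {v : ℝ≥0} (hv : v ≠ 0)
    (w : ι → ℝ) :
    (Measure.pi fun _ : ι => gaussianReal 0 v).map (· + w)
      = (Measure.pi fun _ : ι => gaussianReal 0 v).withDensity
          fun x => ∏ i, ENNReal.ofReal (exp ((w i * x i - w i ^ 2 / 2) / v)) := by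
  rw [← Measure.pi_withDensity
    (f := fun i t => ENNReal.ofReal (exp ((w i * t - w i ^ 2 / 2) / v))) fun i => by fun_prop]
  simp_rw [← gaussianReal_map_add_const_eq_withDensity hv]
  exact Measure.pi_map_pi fun i => (measurable_add_const (w i)).aemeasurable

lemma gaussianPi_eq_map_pi (d : ℕ) (σ : ℝ) :
    gaussianPi d σ = (Measure.pi fun _ : Fin d => gaussianReal 0 (σ ^ 2).toNNReal).map
      (MeasurableEquiv.toLp 2 (Fin d → ℝ)) := by
  rw [Real.toNNReal_of_nonneg (sq_nonneg σ)]
  rfl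

instance (d : ℕ) (σ : ℝ) : IsProbabilityMeasure (gaussianPi d σ) := by
  rw [gaussianPi_eq_map_pi]
  exact Measure.isProbabilityMeasure_map (by fun_prop)

section ShiftDensity

variable {E : Type*} [NormedAddCommGroup E] [InnerProductSpace ℝ E]

noncomputable def gaussianShiftDensity (σ : ℝ) (v x : E) : ℝ :=
  exp ((⟪v, x⟫_ℝ - ‖v‖ ^ 2 / 2) / σ ^ 2)

lemma measurable_gaussianShiftDensity [MeasurableSpace E] [OpensMeasurableSpace E] (σ : ℝ)
    (v : E) : Measurable (gaussianShiftDensity σ v) := by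
  unfold gaussianShiftDensity
  fun_prop

lemma gaussianShiftDensity_nonneg (σ : ℝ) (v : E) : 0 ≤ gaussianShiftDensity σ v :=
  fun _ => (exp_pos _).le

lemma sqrt_gaussianShiftDensity (σ : ℝ) (v x : E) :
    √(gaussianShiftDensity σ v x)
      = exp (-‖v‖ ^ 2 / (8 * σ ^ 2)) * gaussianShiftDensity σ ((2 : ℝ)⁻¹ • v) x := by
  rw [gaussianShiftDensity, gaussianShiftDensity, ← exp_half, ← exp_add, inner_smul_left,
    norm_smul]
  congr 1
  simp only [RCLike.conj_to_real, Real.norm_eq_abs, abs_inv, abs_two]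
  ring

end ShiftDensity

section GaussianPi

variable {d : ℕ} {σ : ℝ}

lemma gaussianPi_map_add_eq_withDensity (hσ : σ ≠ 0) (v : EuclideanSpace ℝ (Fin d)) :
    (gaussianPi d σ).map (· + v)
      = (gaussianPi d σ).withDensity fun x => ENNReal.ofReal (gaussianShiftDensity σ v x) := by
  set e := MeasurableEquiv.toLp 2 (Fin d → ℝ)
  have hvar : (σ ^ 2).toNNReal ≠ 0 := by simpa using hσ
  have hcomm : (· + v) ∘ e = e ∘ (· + v.ofLp) := rfl
  have hdensity : (fun x => ENNReal.ofReal (gaussianShiftDensity σ v x)) ∘ e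
      = fun x => ∏ i, ENNReal.ofReal (exp ((v i * x i - v i ^ 2 / 2) / (σ ^ 2).toNNReal)) := by
    ext x
    rw [Function.comp_apply, gaussianShiftDensity,
      ← ENNReal.ofReal_prod_of_nonneg fun i _ => (exp_pos _).le,
      ← exp_sum, ← Finset.sum_div, Finset.sum_sub_distrib, ← Finset.sum_div,
      EuclideanSpace.real_norm_sq_eq, PiLp.inner_apply, Real.coe_toNNReal _ (sq_nonneg σ)]
    simp [e, mul_comm]
  rw [gaussianPi_eq_map_pi, Measure.map_map (measurable_add_const v) e.measurable, hcomm,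
    ← Measure.map_map e.measurable (measurable_add_const _),
    pi_gaussianReal_map_add_eq_withDensity hvar, ← hdensity, e.map_withDensity_comp]

lemma isProbabilityMeasure_gaussianPi_withDensity (hσ : σ ≠ 0) (v : EuclideanSpace ℝ (Fin d)) :
    IsProbabilityMeasure
      ((gaussianPi d σ).withDensity fun x => ENNReal.ofReal (gaussianShiftDensity σ v x)) := by
  rw [← gaussianPi_map_add_eq_withDensity hσ v]
  exact Measure.isProbabilityMeasure_map (measurable_add_const v).aemeasurable

lemma integral_sqrt_gaussianShiftDensity (hσ : σ ≠ 0) (v : EuclideanSpace ℝ (Fin d)) :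
    ∫ x, √(gaussianShiftDensity σ v x) ∂gaussianPi d σ = exp (-‖v‖ ^ 2 / (8 * σ ^ 2)) := by
  have := isProbabilityMeasure_gaussianPi_withDensity hσ ((2 : ℝ)⁻¹ • v)
  simp_rw [sqrt_gaussianShiftDensity σ, integral_const_mul]
  rw [integral_eq_one_of_isProbabilityMeasure_withDensity_ofReal
    (gaussianShiftDensity_nonneg σ _) (measurable_gaussianShiftDensity σ _).aestronglyMeasurable,
    mul_one]

end GaussianPi

lemma sqrt_one_sub_exp_neg_sq_le {t : ℝ} (ht : 0 ≤ t) : √(1 - exp (-t ^ 2)) ≤ t := by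
  rw [sqrt_le_left ht]
  linarith [one_sub_le_exp_neg (t ^ 2)]

theorem gaussianPi_translate_total_variation (d : ℕ) (σ : ℝ) (hσ : 0 < σ)
    (v : EuclideanSpace ℝ (Fin d)) (A : Set (EuclideanSpace ℝ (Fin d)))
    (hA : MeasurableSet A) :
    |(gaussianPi d σ A).toReal - (gaussianPi d σ {x | x + v ∈ A}).toReal| ≤
      ‖v‖ / (2 * σ) := by
  have := isProbabilityMeasure_gaussianPi_withDensity hσ.ne' v
  have hshift : gaussianPi d σ {x | x + v ∈ A}
      = (gaussianPi d σ).withDensity (fun x => ENNReal.ofReal (gaussianShiftDensity σ v x)) A := by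
    rw [← gaussianPi_map_add_eq_withDensity hσ.ne', Measure.map_apply (measurable_add_const v) hA]
    rfl
  have haffinity : (∫ x, √(gaussianShiftDensity σ v x) ∂gaussianPi d σ) ^ 2
      = exp (-(‖v‖ / (2 * σ)) ^ 2) := by
    rw [integral_sqrt_gaussianShiftDensity hσ.ne', sq, ← exp_add]
    congr 1
    field_simp
    ring
  calc |(gaussianPi d σ A).toReal - (gaussianPi d σ {x | x + v ∈ A}).toReal|
      ≤ √(1 - (∫ x, √(gaussianShiftDensity σ v x) ∂gaussianPi d σ) ^ 2) := by
        rw [hshift]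
        exact abs_measureReal_sub_withDensity_ofReal_le (gaussianShiftDensity_nonneg σ v)
          (measurable_gaussianShiftDensity σ v).aestronglyMeasurable hA
    _ ≤ ‖v‖ / (2 * σ) := by
        rw [haffinity]
        exact sqrt_one_sub_exp_neg_sq_le (by positivity)
end

section
/- For every σ > 0, every a ∈ ℝ, and every measurable set A ⊆ ℝ: |N(0, σ²)(A) − N(a, σ²)(A)| ≤ |a|/(2σ). -/
/-!
Let `f` and `g` be the densities of `N(0, v)` and `N(a, v)`. Over all sets, `∫_A (f - g)` is largest
on the half-line `B = {x | |x| ≤ |x - a|}`, where `f ≥ g`. Translating, `N(a, v)(B) = N(0, v)(B - a)`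
with `B - a ⊆ B`, so the difference on `B` is the `N(0, v)`-mass of a slab of length `|a|`, at most
`|a| · sup f = |a| / √(2πv)`. The other sign follows by passing to complements, and
`√(2πσ²) ≥ 2σ`.
-/

open MeasureTheory ProbabilityTheory Real Set
open scoped NNReal

lemma abs_le_abs_sub_of_abs_add_le {x a : ℝ} (h : |x + a| ≤ |x|) : |x| ≤ |x - a| := by
  rw [← sq_le_sq] at h ⊢
  nlinarith [sq_nonneg a]

lemma abs_le_half_abs_of_abs_le_abs_sub_of_abs_lt_abs_add {x a : ℝ} (h₁ : |x| ≤ |x - a|)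
    (h₂ : |x| < |x + a|) : |x| ≤ |a| / 2 := by
  rw [← sq_le_sq] at h₁
  rw [← sq_lt_sq] at h₂
  rcases lt_trichotomy a 0 with ha | rfl | ha
  · rw [abs_of_neg ha, abs_le]; constructor <;> nlinarith
  · simp at h₂
  · rw [abs_of_pos ha, abs_le]; constructor <;> nlinarith

section SetIntegral

variable {α : Type*} [MeasurableSpace α] {μ : Measure α} {f : α → ℝ} {s t : Set α}

lemma setIntegral_le_setIntegral_of_nonneg_of_nonpos_compl (hf : Integrable f μ)
    (hs : MeasurableSet s) (ht : MeasurableSet t) (hf_nonneg : ∀ x ∈ t, 0 ≤ f x)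
    (hf_nonpos : ∀ x ∉ t, f x ≤ 0) : ∫ x in s, f x ∂μ ≤ ∫ x in t, f x ∂μ := by
  rw [← integral_indicator hs, ← integral_indicator ht]
  refine integral_mono (hf.indicator hs) (hf.indicator ht) fun x => ?_
  by_cases hxt : x ∈ t <;> by_cases hxs : x ∈ s <;> simp [hxs, hxt, hf_nonneg, hf_nonpos]

end SetIntegral

lemma abs_measureReal_sub_le_of_forall_sub_le {α : Type*} [MeasurableSpace α] {μ ν : Measure α}
    [IsProbabilityMeasure μ] [IsProbabilityMeasure ν] {c : ℝ}
    (h : ∀ s, MeasurableSet s → μ.real s - ν.real s ≤ c) {s : Set α} (hs : MeasurableSet s) :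
    |μ.real s - ν.real s| ≤ c := by
  refine abs_sub_le_iff.2 ⟨h s hs, ?_⟩
  have h_compl := h sᶜ hs.compl
  rw [probReal_compl_eq_one_sub hs, probReal_compl_eq_one_sub hs] at h_compl
  linarith

namespace ProbabilityTheory

variable {m : ℝ} {v : ℝ≥0}

lemma gaussianPDFReal_le_gaussianPDFReal_of_abs_sub_le {m₁ m₂ x : ℝ} (h : |x - m₁| ≤ |x - m₂|) :
    gaussianPDFReal m₂ v x ≤ gaussianPDFReal m₁ v x := by
  simp only [gaussianPDFReal]
  have := sq_le_sq.2 h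
  gcongr

lemma gaussianPDFReal_le_inv_sqrt (x : ℝ) : gaussianPDFReal m v x ≤ (√(2 * π * v))⁻¹ := by
  rw [gaussianPDFReal_def]
  refine mul_le_of_le_one_right (by positivity) (exp_le_one_iff.2 ?_)
  exact div_nonpos_of_nonpos_of_nonneg (neg_nonpos.2 (sq_nonneg _)) (by positivity)

lemma gaussianReal_real_apply (hv : v ≠ 0) (s : Set ℝ) :
    (gaussianReal m v).real s = ∫ x in s, gaussianPDFReal m v x := by
  rw [measureReal_def, gaussianReal_apply_eq_integral _ hv,
    ENNReal.toReal_ofReal (integral_nonneg fun x => gaussianPDFReal_nonneg _ _ _)]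

lemma gaussianReal_real_le_inv_sqrt_mul_volume (hv : v ≠ 0) {s : Set ℝ} (hs : volume s ≠ ⊤) :
    (gaussianReal m v).real s ≤ (√(2 * π * v))⁻¹ * volume.real s := by
  rw [gaussianReal_real_apply hv, mul_comm, ← smul_eq_mul, ← setIntegral_const]
  exact integral_mono (integrable_gaussianPDFReal m v).integrableOn (integrableOn_const hs)
    gaussianPDFReal_le_inv_sqrt

lemma gaussianReal_real_sub_gaussianReal_real_le (hv : v ≠ 0) (a : ℝ) {s : Set ℝ}
    (hs : MeasurableSet s) :
    (gaussianReal 0 v).real s - (gaussianReal a v).real s ≤ |a| / √(2 * π * v) := by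
  set B := {x : ℝ | |x| ≤ |x - a|}
  have hB : MeasurableSet B := measurableSet_le (by fun_prop) (by fun_prop)
  have hB_shift : (· + a) ⁻¹' B ⊆ B := fun x (hx : |x + a| ≤ |x + a - a|) =>
    abs_le_abs_sub_of_abs_add_le (by rwa [add_sub_cancel_right] at hx)
  have h_slab : B \ (· + a) ⁻¹' B ⊆ Icc (-(|a| / 2)) (|a| / 2) := by
    rintro x ⟨hx, (hx' : ¬|x + a| ≤ |x + a - a|)⟩
    rw [add_sub_cancel_right, not_le] at hx'
    exact abs_le.1 (abs_le_half_abs_of_abs_le_abs_sub_of_abs_lt_abs_add hx hx')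
  have h_map : (gaussianReal 0 v).map (· + a) = gaussianReal a v := by
    simpa using gaussianReal_map_add_const (μ := 0) (v := v) a
  have hf := integrable_gaussianPDFReal 0 v
  have hg := integrable_gaussianPDFReal a v
  calc (gaussianReal 0 v).real s - (gaussianReal a v).real s
      = ∫ x in s, (gaussianPDFReal 0 v x - gaussianPDFReal a v x) := by
        rw [gaussianReal_real_apply hv, gaussianReal_real_apply hv,
          integral_sub hf.integrableOn hg.integrableOn]
    _ ≤ ∫ x in B, (gaussianPDFReal 0 v x - gaussianPDFReal a v x) := by
        refine setIntegral_le_setIntegral_of_nonneg_of_nonpos_compl (hf.sub hg) hs hB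
          (fun x hx => sub_nonneg.2 ?_) (fun x hx => sub_nonpos.2 ?_)
        · exact gaussianPDFReal_le_gaussianPDFReal_of_abs_sub_le (by rwa [sub_zero])
        · exact gaussianPDFReal_le_gaussianPDFReal_of_abs_sub_le
            (by rw [sub_zero]; exact (not_le.1 (show ¬|x| ≤ |x - a| from hx)).le)
    _ = (gaussianReal 0 v).real (B \ (· + a) ⁻¹' B) := by
        rw [integral_sub hf.integrableOn hg.integrableOn, ← gaussianReal_real_apply hv,
          ← gaussianReal_real_apply hv, measureReal_sdiff hB_shift (measurable_add_const a hB),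
          ← map_measureReal_apply (measurable_add_const a) hB, h_map]
    _ ≤ (√(2 * π * v))⁻¹ * volume.real (Icc (-(|a| / 2)) (|a| / 2)) := by
        have h_Icc : volume (Icc (-(|a| / 2)) (|a| / 2)) ≠ ⊤ := measure_Icc_lt_top.ne
        grw [gaussianReal_real_le_inv_sqrt_mul_volume hv (measure_ne_top_of_subset h_slab h_Icc),
          measureReal_mono h_slab h_Icc]
    _ = |a| / √(2 * π * v) := by
        rw [volume_real_Icc_of_le (by linarith [abs_nonneg a])]
        ring

end ProbabilityTheory

theorem gaussianReal_mean_shift_total_variation (σ : ℝ) (hσ : 0 < σ) (a : ℝ)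
    (A : Set ℝ) (hA : MeasurableSet A) :
    |((gaussianReal 0 ⟨σ ^ 2, sq_nonneg σ⟩) A).toReal -
        ((gaussianReal a ⟨σ ^ 2, sq_nonneg σ⟩) A).toReal| ≤ |a| / (2 * σ) := by
  set v : ℝ≥0 := ⟨σ ^ 2, sq_nonneg σ⟩
  have hv : v ≠ 0 := by
    rw [ne_eq, ← NNReal.coe_eq_zero]
    exact (pow_pos hσ 2).ne'
  have h_sqrt : 2 * σ ≤ √(2 * π * v) := by
    refine le_sqrt_of_sq_le ?_
    change (2 * σ) ^ 2 ≤ 2 * π * σ ^ 2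
    nlinarith [pi_gt_three, sq_nonneg σ]
  calc _ ≤ |a| / √(2 * π * v) := abs_measureReal_sub_le_of_forall_sub_le
        (fun s hs => gaussianReal_real_sub_gaussianReal_real_le hv a hs) hA
    _ ≤ |a| / (2 * σ) := div_le_div_of_nonneg_left (abs_nonneg a) (by positivity) h_sqrt
end
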